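/- Let M be a reductive monoid, i.e., for every f, g ∈ M there exists h ∈ M with f = hg or g = hf. Let L be a first-order language whose only relation symbols besides equality are unary, whose function symbols are unary and indexed by the elements of M, and which has one constant symbol w. Let B be a theory in L satisfying: ∀x (A(x) → A(w)) for every unary relation symbol A; f(w) ≈ w for every f ∈ M; i(x) ≈ x for the identity i of M, and f(g(x)) ≈ h(x) whenever h = gf in M; and ∀x∀y (f(x) ≈ f(y) → x ≈ y) for every f ∈ M. Then every quasi-identity of L is equivalent modulo B to a finite set of quasi-identities each containing at most one variable. -/

import Mathlib

open FirstOrder FirstOrder.Language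

universe u w

/-- A quasi-identity whose matrix has `n` universally quantified variables. -/
def IsQuasiIdentityN {L : FirstOrder.Language.{u, u}} (n : ℕ) (σ : L.Sentence) : Prop :=
  ∃ (hyps : List (L.BoundedFormula Empty n)) (concl : L.BoundedFormula Empty n),
    (∀ φ ∈ hyps, φ.IsAtomic) ∧ concl.IsAtomic ∧
      σ = BoundedFormula.alls ((hyps.foldr (· ⊓ ·) ⊤).imp concl)

/-- A quasi-identity: the universal closure of an implication whose premise is a
finite (possibly empty) conjunction of atomic formulas and whose conclusion is an
atomic formula. -/
def IsQuasiIdentity {L : FirstOrder.Language.{u, u}} (σ : L.Sentence) : Prop :=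
  ∃ n, IsQuasiIdentityN n σ

/-- Two sets `Φ`, `Ψ` of sentences are equivalent modulo a theory `T₀` if
`T₀ ∪ Φ` and `T₀ ∪ Ψ` have exactly the same models. -/
def EquivModulo {L : FirstOrder.Language.{u, u}} (T₀ Φ Ψ : L.Theory) : Prop :=
  ∀ (M : Type w) [L.Structure M] [Nonempty M], M ⊨ T₀ ∪ Φ ↔ M ⊨ T₀ ∪ Ψ

/-- A monoid is reductive if for every pair `f, g` there is `h` such that
either `f = hg` or `g = hf`. -/
def IsReductive (M : Type u) [Monoid M] : Prop :=
  ∀ f g : M, ∃ h : M, f = h * g ∨ g = h * f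

/-- The language with unary relation symbols indexed by `R`, a unary function
symbol for each element of `M`, and one constant symbol `w`. -/
def LangM (R : Type u) (M : Type u) : FirstOrder.Language.{u, u} where
  Functions := fun n => match n with
    | 0 => PUnit
    | 1 => M
    | _ + 2 => PEmpty
  Relations := fun n => match n with
    | 1 => R
    | _ => PEmpty

/-- The constant term `w`. -/
def wTerm (R M : Type u) {α : Type*} : (LangM R M).Term α :=
  Constants.term (PUnit.unit : (LangM R M).Constants)

/-- Application of the unary function symbol corresponding to `f ∈ M`. -/
def fnApp {R M : Type u} {α : Type*} (f : M) (t : (LangM R M).Term α) :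
    (LangM R M).Term α :=
  Functions.apply₁ (show (LangM R M).Functions 1 from f) t

/-- The atomic formula `A(t)` for the unary relation symbol indexed by `r ∈ R`. -/
def relAtom {R M : Type u} {n : ℕ} (r : R) (t : (LangM R M).Term (Empty ⊕ Fin n)) :
    (LangM R M).BoundedFormula Empty n :=
  Relations.boundedFormula₁ (show (LangM R M).Relations 1 from r) t

/-- The variable `x` in a context of one bound variable. -/
def x1 (R M : Type u) : (LangM R M).Term (Empty ⊕ Fin 1) := &0

/-- The variable `x` in a context of two bound variables. -/
def x2 (R M : Type u) : (LangM R M).Term (Empty ⊕ Fin 2) := &0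

/-- The variable `y` in a context of two bound variables. -/
def y2 (R M : Type u) : (LangM R M).Term (Empty ⊕ Fin 2) := &1


/-!
Modulo `B` every term is `w` or `f(xᵢ)` for a single variable `xᵢ`, so a quasi-identity is an
implication between atoms `s ≈ t` and `A(t)` built from such terms. A hypothesis
`f(xᵢ) ≈ g(xⱼ)` with `i ≠ j` is, by reductivity (say `f = hg`) and injectivity of `g`, equivalent
to `xⱼ ≈ h(xᵢ)`, and `f(xᵢ) ≈ w` is equivalent to `xᵢ ≈ w`; substituting for the solved variable
removes that hypothesis without changing the models of `B` in which the quasi-identity holds.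
Once every hypothesis has the same variable on both sides, the quasi-identity holds iff it holds
at every assignment sending all variables but one to `w`: such an assignment still satisfies the
hypotheses, because `f(w) = w` and `w` lies in every relation that is nonempty. Holding at these
assignments is what the one-variable quasi-identities obtained by substituting `w` for all
variables but one express.
-/

namespace LangM

variable {R M : Type u}

section Semantics

variable (R) {N : Type w} [(LangM R M).Structure N]

def act (f : M) (a : N) : N :=
  Structure.funMap (L := LangM R M) (show (LangM R M).Functions 1 from f) ![a]

variable (M)

def wElem : N := constantMap (L := LangM R M) (show (LangM R M).Constants from PUnit.unit)

def RelAt (r : R) (a : N) : Prop :=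
  Structure.RelMap (L := LangM R M) (show (LangM R M).Relations 1 from r) ![a]

variable (N) in
structure IsBModel [Monoid M] : Prop where
  act_one : ∀ a : N, act R (1 : M) a = a
  act_act : ∀ (f g : M) (a : N), act R f (act R g a) = act R (g * f) a
  act_wElem : ∀ f : M, act R f (wElem R M : N) = wElem R M
  act_injective : ∀ f : M, Function.Injective (act R f : N → N)
  relAt_wElem : ∀ (r : R) (a : N), RelAt R M r a → RelAt R M r (wElem R M : N)

variable {R M}

@[simp]
theorem realize_fnApp {α : Type*} (f : M) (t : (LangM R M).Term α) (v : α → N) :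
    (fnApp f t).realize v = act R f (t.realize v) :=
  Term.realize_functions_apply₁

@[simp]
theorem realize_wTerm {α : Type*} (v : α → N) : (wTerm R M).realize v = wElem R M :=
  Term.realize_constants

@[simp]
theorem realize_relAtom {n : ℕ} (r : R) (t : (LangM R M).Term (Empty ⊕ Fin n))
    (v : Empty → N) (xs : Fin n → N) :
    (relAtom r t).Realize v xs ↔ RelAt R M r (t.realize (Sum.elim v xs)) :=
  BoundedFormula.realize_rel₁

theorem isBModel_of_models [Monoid M] {B : (LangM R M).Theory}
    (hBrel : ∀ r : R,
      B ⊨ᵇ ((relAtom r (x1 R M)).imp (relAtom r (wTerm R M))).all)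
    (hBw : ∀ f : M,
      B ⊨ᵇ ((fnApp f (wTerm R M)).bdEqual (wTerm R M) : (LangM R M).Sentence))
    (hBid : B ⊨ᵇ ((fnApp (1 : M) (x1 R M)).bdEqual (x1 R M)).all)
    (hBcomp : ∀ f g h : M, h = g * f →
      B ⊨ᵇ ((fnApp f (fnApp g (x1 R M))).bdEqual (fnApp h (x1 R M))).all)
    (hBinj : ∀ f : M,
      B ⊨ᵇ (((fnApp f (x2 R M)).bdEqual (fnApp f (y2 R M))).imp
        ((x2 R M).bdEqual (y2 R M))).all.all)
    [N ⊨ B] [Nonempty N] : IsBModel R M N where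
  act_one a := by
    simpa [Sentence.Realize, x1, Fin.snoc] using hBid.realize_sentence N a
  act_act f g a := by
    simpa [Sentence.Realize, x1, Fin.snoc] using (hBcomp f g _ rfl).realize_sentence N a
  act_wElem f := by
    simpa [Sentence.Realize, Formula.Realize] using (hBw f).realize_sentence N
  act_injective f a b := by
    simpa [Sentence.Realize, x2, y2, Fin.snoc] using (hBinj f).realize_sentence N a b
  relAt_wElem r a := by
    simpa [Sentence.Realize, x1, Fin.snoc] using (hBrel r).realize_sentence N a

end Semantics

/-- Terms in normal form: `none` stands for `w` and `some (f, i)` for `f(xᵢ)`. -/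
def NTerm (M : Type u) (n : ℕ) := Option (M × Fin n)

namespace NTerm

variable {n m : ℕ}

def var? (t : NTerm M n) : Option (Fin n) := Option.map Prod.snd t

def toTerm (R : Type u) : NTerm M n → (LangM R M).Term (Empty ⊕ Fin n)
  | none => wTerm R M
  | some (f, i) => fnApp f (&i)

section Realize

variable (R) {N : Type w} [(LangM R M).Structure N]

def realize (xs : Fin n → N) : NTerm M n → N
  | none => wElem R M
  | some (f, i) => act R f (xs i)

variable {R}

@[simp]
theorem realize_toTerm (v : Empty → N) (xs : Fin n → N) (t : NTerm M n) :
    (t.toTerm R).realize (Sum.elim v xs) = t.realize R xs := by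
  rcases t with _ | ⟨f, i⟩ <;> simp [toTerm, realize]

theorem realize_update_of_var?_ne {t : NTerm M n} {j : Fin n} (ht : t.var? ≠ some j)
    (xs : Fin n → N) (a : N) : t.realize R (Function.update xs j a) = t.realize R xs := by
  rcases t with _ | ⟨f, i⟩
  · rfl
  · simp only [var?, Option.map_some, ne_eq, Option.some.injEq] at ht
    simp [realize, Function.update_of_ne ht]

end Realize

variable [Monoid M]

def ofVar (k : Fin n) : NTerm M n := some (1, k)

def app (f : M) (t : NTerm M n) : NTerm M n := Option.map (fun p => (p.1 * f, p.2)) t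

def subst (ρ : Fin n → NTerm M m) (t : NTerm M n) : NTerm M m :=
  Option.bind t fun p => (ρ p.2).app p.1

variable {N : Type w} [(LangM R M).Structure N]

theorem realize_ofVar (hN : IsBModel R M N) (xs : Fin n → N) (k : Fin n) :
    (ofVar k : NTerm M n).realize R xs = xs k :=
  hN.act_one _

theorem realize_app (hN : IsBModel R M N) (xs : Fin n → N) (f : M) (t : NTerm M n) :
    (t.app f).realize R xs = act R f (t.realize R xs) := by
  rcases t with _ | ⟨g, i⟩
  · exact (hN.act_wElem f).symm
  · exact (hN.act_act f g _).symm

theorem realize_subst (hN : IsBModel R M N) (ρ : Fin n → NTerm M m) (xs : Fin m → N)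
    (t : NTerm M n) : (t.subst ρ).realize R xs = t.realize R fun k => (ρ k).realize R xs := by
  rcases t with _ | ⟨f, i⟩
  · rfl
  · exact realize_app hN xs f (ρ i)

end NTerm

inductive NAtom (R M : Type u) (n : ℕ) : Type u
  | eq : NTerm M n → NTerm M n → NAtom R M n
  | rel : R → NTerm M n → NAtom R M n

namespace NAtom

variable {n m : ℕ}

def IsBalanced : NAtom R M n → Prop
  | eq s t => s.var? = t.var?
  | rel _ _ => True

def toFormula : NAtom R M n → (LangM R M).BoundedFormula Empty n
  | eq s t => (s.toTerm R).bdEqual (t.toTerm R)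
  | rel r t => relAtom r (t.toTerm R)

theorem isAtomic_toFormula (γ : NAtom R M n) : γ.toFormula.IsAtomic := by
  cases γ
  · exact .equal _ _
  · exact .rel _ _

variable {N : Type w} [(LangM R M).Structure N]

def Realize (xs : Fin n → N) : NAtom R M n → Prop
  | eq s t => s.realize R xs = t.realize R xs
  | rel r t => RelAt R M r (t.realize R xs)

@[simp]
theorem realize_toFormula (v : Empty → N) (xs : Fin n → N) (γ : NAtom R M n) :
    γ.toFormula.Realize v xs ↔ γ.Realize xs := by
  cases γ <;> simp [toFormula, Realize]

theorem realize_eq_comm {s t : NTerm M n} {xs : Fin n → N} :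
    (eq s t : NAtom R M n).Realize xs ↔ (eq t s : NAtom R M n).Realize xs :=
  eq_comm

variable [Monoid M]

def subst (ρ : Fin n → NTerm M m) : NAtom R M n → NAtom R M m
  | eq s t => eq (s.subst ρ) (t.subst ρ)
  | rel r t => rel r (t.subst ρ)

theorem realize_subst (hN : IsBModel R M N) (ρ : Fin n → NTerm M m) (xs : Fin m → N)
    (γ : NAtom R M n) : (γ.subst ρ).Realize xs ↔ γ.Realize fun k => (ρ k).realize R xs := by
  cases γ <;> simp [subst, Realize, NTerm.realize_subst hN]

theorem realize_eq_some_iff (hN : IsBModel R M N) {s u : NTerm M n} {g : M} {j : Fin n}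
    (hu : ∀ xs : Fin n → N, act R g (u.realize R xs) = s.realize R xs) (xs : Fin n → N) :
    (eq s (some (g, j)) : NAtom R M n).Realize xs ↔ xs j = u.realize R xs := by
  change s.realize R xs = act R g (xs j) ↔ _
  rw [← hu, (hN.act_injective g).eq_iff, eq_comm]

theorem exists_solved_form (hred : IsReductive M) {γ : NAtom R M n} (hγ : ¬γ.IsBalanced) :
    ∃ (j : Fin n) (u : NTerm M n), u.var? ≠ some j ∧
      ∀ (N : Type w) [(LangM R M).Structure N], IsBModel R M N →
        ∀ xs : Fin n → N, γ.Realize xs ↔ xs j = u.realize R xs := by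
  rcases γ with ⟨_ | ⟨f, i⟩, _ | ⟨g, j⟩⟩ | ⟨r, t⟩
  · exact absurd rfl hγ
  · exact ⟨j, none, nofun, fun N _ hN => realize_eq_some_iff hN fun _ => hN.act_wElem g⟩
  · exact ⟨i, none, nofun, fun N _ hN xs =>
      realize_eq_comm.trans (realize_eq_some_iff hN (fun _ => hN.act_wElem f) xs)⟩
  · have hij : i ≠ j := fun h => hγ (congrArg some h)
    obtain ⟨h, rfl | rfl⟩ := hred f g
    · exact ⟨j, some (h, i), by simpa [NTerm.var?] using hij, fun N _ hN =>
        realize_eq_some_iff hN fun _ => hN.act_act g h _⟩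
    · exact ⟨i, some (h, j), by simpa [NTerm.var?] using hij.symm, fun N _ hN xs =>
        realize_eq_comm.trans (realize_eq_some_iff hN (fun _ => hN.act_act f h _) xs)⟩
  · exact absurd trivial hγ

end NAtom

section Normalize

variable [Monoid M] {n : ℕ} {N : Type w} [(LangM R M).Structure N]

def normTerm : (LangM R M).Term (Empty ⊕ Fin n) → NTerm M n
  | .var (.inl e) => e.elim
  | .var (.inr i) => .ofVar i
  | .func (l := 0) _ _ => none
  | .func (l := 1) f ts => (normTerm (ts 0)).app (show M from f)
  | .func (l := _ + 2) f _ => (show PEmpty from f).elim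

theorem realize_normTerm (hN : IsBModel R M N) (v : Empty → N) (xs : Fin n → N)
    (t : (LangM R M).Term (Empty ⊕ Fin n)) :
    t.realize (Sum.elim v xs) = (normTerm t).realize R xs := by
  induction t with
  | var x =>
    rcases x with e | i
    · exact e.elim
    · exact (NTerm.realize_ofVar hN xs i).symm
  | @func l f ts ih =>
    match l, f, ts, ih with
    | 0, f, _, _ => exact congrArg (Structure.funMap f) (Subsingleton.elim _ _)
    | 1, f, ts, ih =>
      rw [normTerm, NTerm.realize_app hN, ← ih 0]
      exact congrArg (Structure.funMap f) (funext fun i => by rw [Fin.fin_one_eq_zero i]; rfl)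
    | _ + 2, f, _, _ => exact (show PEmpty from f).elim

-- The last clause is a junk value: it is only reached on non-atomic formulas.
def normAtom : (LangM R M).BoundedFormula Empty n → NAtom R M n
  | .equal t₁ t₂ => .eq (normTerm t₁) (normTerm t₂)
  | .rel (l := 1) r ts => .rel r (normTerm (ts 0))
  | _ => .eq none none

theorem realize_normAtom (hN : IsBModel R M N) {φ : (LangM R M).BoundedFormula Empty n}
    (hφ : φ.IsAtomic) (v : Empty → N) (xs : Fin n → N) :
    φ.Realize v xs ↔ (normAtom φ).Realize xs := by
  induction hφ with
  | equal t₁ t₂ =>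
    change _ = _ ↔ (normTerm t₁).realize R xs = (normTerm t₂).realize R xs
    rw [realize_normTerm hN v xs, realize_normTerm hN v xs]
  | @rel l r ts =>
    match l, r, ts with
    | 0, r, _ => exact (show PEmpty from r).elim
    | 1, r, ts =>
      change _ ↔ RelAt R M r ((normTerm (ts 0)).realize R xs)
      rw [BoundedFormula.realize_rel, ← realize_normTerm hN v xs]
      exact iff_of_eq (congrArg (Structure.RelMap r)
        (funext fun i => by rw [Fin.fin_one_eq_zero i]; rfl))
    | _ + 2, r, _ => exact (show PEmpty from r).elim

end Normalize

section Focus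

variable {n : ℕ} {N : Type w} [(LangM R M).Structure N]

variable (R M) in
def focusPoint (xs : Fin n → N) (o : Option (Fin n)) : Fin n → N :=
  fun k => if o = some k then xs k else wElem R M

theorem NTerm.realize_focusPoint_var? (xs : Fin n → N) (t : NTerm M n) :
    t.realize R (focusPoint R M xs t.var?) = t.realize R xs := by
  rcases t with _ | ⟨f, k⟩ <;> simp [realize, focusPoint, var?]

variable [Monoid M]

def NTerm.focus (o : Option (Fin n)) : Fin n → NTerm M 1 :=
  fun k => if o = some k then ofVar 0 else none

theorem NTerm.realize_focusPoint_of_ne (hN : IsBModel R M N) (xs : Fin n → N)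
    {t : NTerm M n} {o : Option (Fin n)} (ht : t.var? ≠ o) :
    t.realize R (focusPoint R M xs o) = wElem R M := by
  rcases t with _ | ⟨f, k⟩
  · rfl
  · have hk : o ≠ some k := fun h => ht (h ▸ rfl)
    simp only [realize, focusPoint, if_neg hk, hN.act_wElem]

theorem NTerm.realize_focus (hN : IsBModel R M N) (xs : Fin n → N) (o : Option (Fin n)) :
    (fun k => (focus (M := M) o k).realize R fun _ => o.elim (wElem R M) xs) =
      focusPoint R M xs o := by
  funext k
  by_cases hk : o = some k
  · subst hk
    simp [focus, focusPoint, realize_ofVar hN]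
  · simp [focus, focusPoint, hk, realize]

theorem NAtom.realize_focusPoint_of_isBalanced (hN : IsBModel R M N) {γ : NAtom R M n}
    (hγ : γ.IsBalanced) {xs : Fin n → N} (h : γ.Realize xs) (o : Option (Fin n)) :
    γ.Realize (focusPoint R M xs o) := by
  rcases γ with ⟨s, t⟩ | ⟨r, t⟩
  · change s.var? = t.var? at hγ
    change s.realize R _ = t.realize R _
    by_cases hs : s.var? = o
    · subst hs
      rw [NTerm.realize_focusPoint_var?, hγ, NTerm.realize_focusPoint_var?]
      exact h
    · rw [NTerm.realize_focusPoint_of_ne hN xs hs,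
        NTerm.realize_focusPoint_of_ne hN xs (hγ ▸ hs)]
  · change RelAt R M r (t.realize R _)
    by_cases ht : t.var? = o
    · subst ht
      rwa [NTerm.realize_focusPoint_var?]
    · rw [NTerm.realize_focusPoint_of_ne hN xs ht]
      exact hN.relAt_wElem r _ h

theorem NAtom.realize_of_forall_focusPoint (hN : IsBModel R M N) {γ : NAtom R M n}
    {xs : Fin n → N} (h : ∀ o, γ.Realize (focusPoint R M xs o)) : γ.Realize xs := by
  rcases γ with ⟨s, t⟩ | ⟨r, t⟩
  · have hs : s.realize R xs = t.realize R (focusPoint R M xs s.var?) := by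
      simpa [Realize, NTerm.realize_focusPoint_var?] using h s.var?
    have ht : s.realize R (focusPoint R M xs t.var?) = t.realize R xs := by
      simpa [Realize, NTerm.realize_focusPoint_var?] using h t.var?
    by_cases hst : s.var? = t.var?
    · rwa [hst, NTerm.realize_focusPoint_var?] at hs
    · rw [NTerm.realize_focusPoint_of_ne hN xs (Ne.symm hst)] at hs
      rw [NTerm.realize_focusPoint_of_ne hN xs hst] at ht
      exact hs.trans ht
  · simpa [Realize, NTerm.realize_focusPoint_var?] using h t.var?

end Focus

structure NQuasiId (R M : Type u) (n : ℕ) where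
  hyps : List (NAtom R M n)
  concl : NAtom R M n

namespace NQuasiId

variable {n m : ℕ} {N : Type w} [(LangM R M).Structure N]

variable (N) in
def Realize (q : NQuasiId R M n) : Prop :=
  ∀ xs : Fin n → N, (∀ γ ∈ q.hyps, γ.Realize xs) → q.concl.Realize xs

def toSentence (q : NQuasiId R M n) : (LangM R M).Sentence :=
  BoundedFormula.alls (((q.hyps.map NAtom.toFormula).foldr (· ⊓ ·) ⊤).imp q.concl.toFormula)

theorem isQuasiIdentityN_toSentence (q : NQuasiId R M n) : IsQuasiIdentityN n q.toSentence :=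
  ⟨_, _, by simpa using fun γ _ => γ.isAtomic_toFormula, q.concl.isAtomic_toFormula, rfl⟩

theorem realize_toSentence (q : NQuasiId R M n) : N ⊨ q.toSentence ↔ q.Realize N := by
  simp [toSentence, Sentence.Realize, Realize]

variable [Monoid M]

def ofFormulas (hyps : List ((LangM R M).BoundedFormula Empty n))
    (concl : (LangM R M).BoundedFormula Empty n) : NQuasiId R M n :=
  ⟨hyps.map normAtom, normAtom concl⟩

theorem realize_alls_iff_realize_ofFormulas (hN : IsBModel R M N)
    {hyps : List ((LangM R M).BoundedFormula Empty n)} (hhyps : ∀ φ ∈ hyps, φ.IsAtomic)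
    {concl : (LangM R M).BoundedFormula Empty n} (hconcl : concl.IsAtomic) :
    N ⊨ BoundedFormula.alls ((hyps.foldr (· ⊓ ·) ⊤).imp concl) ↔
      (ofFormulas hyps concl).Realize N := by
  simp only [Sentence.Realize, BoundedFormula.realize_alls, BoundedFormula.realize_imp,
    BoundedFormula.realize_foldr_inf, Realize, ofFormulas, List.forall_mem_map]
  exact forall_congr' fun xs => imp_congr
    (forall₂_congr fun φ hφ => realize_normAtom hN (hhyps φ hφ) _ _)
    (realize_normAtom hN hconcl _ _)

def subst (ρ : Fin n → NTerm M m) (q : NQuasiId R M n) : NQuasiId R M m :=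
  ⟨q.hyps.map (NAtom.subst ρ), q.concl.subst ρ⟩

theorem realize_subst_iff (hN : IsBModel R M N) (ρ : Fin n → NTerm M m) (q : NQuasiId R M n) :
    (q.subst ρ).Realize N ↔ ∀ ys : Fin m → N,
      (∀ γ ∈ q.hyps, γ.Realize fun k => (ρ k).realize R ys) →
        q.concl.Realize fun k => (ρ k).realize R ys := by
  simp [Realize, subst, NAtom.realize_subst hN]

def eliminate [DecidableEq (NAtom R M n)] (q : NQuasiId R M n) (γ : NAtom R M n) (j : Fin n)
    (u : NTerm M n) : NQuasiId R M n :=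
  (mk (q.hyps.erase γ) q.concl).subst (Function.update NTerm.ofVar j u)

theorem realize_iff_realize_eliminate [DecidableEq (NAtom R M n)] (hN : IsBModel R M N)
    {q : NQuasiId R M n} {γ : NAtom R M n} (hγ : γ ∈ q.hyps) {j : Fin n} {u : NTerm M n}
    (hu : u.var? ≠ some j) (hsolve : ∀ xs : Fin n → N, γ.Realize xs ↔ xs j = u.realize R xs) :
    q.Realize N ↔ (q.eliminate γ j u).Realize N := by
  have hρ (xs : Fin n → N) : (fun k => (Function.update NTerm.ofVar j u k).realize R xs) =
      Function.update xs j (u.realize R xs) := by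
    funext k
    rw [Function.apply_update (fun _ (t : NTerm M n) => t.realize R xs)]
    simp only [NTerm.realize_ofVar hN]
  have hfix (xs : Fin n → N) (h : γ.Realize xs) : Function.update xs j (u.realize R xs) = xs := by
    rw [← (hsolve xs).1 h, Function.update_eq_self]
  have hsol (xs : Fin n → N) : γ.Realize (Function.update xs j (u.realize R xs)) := by
    rw [hsolve, Function.update_self, NTerm.realize_update_of_var?_ne hu]
  simp only [eliminate, realize_subst_iff hN, hρ]
  constructor
  · intro h ys hys
    refine h _ fun δ hδ => ?_
    rcases eq_or_ne δ γ with rfl | hne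
    · exact hsol ys
    · exact hys δ ((List.mem_erase_of_ne hne).2 hδ)
  · intro h xs hxs
    have hc := h xs fun δ hδ => by
      rw [hfix xs (hxs γ hγ)]
      exact hxs δ (List.mem_of_mem_erase hδ)
    rwa [hfix xs (hxs γ hγ)] at hc

theorem realize_iff_forall_realize_subst_focus (hN : IsBModel R M N) (q : NQuasiId R M n)
    (hbal : ∀ γ ∈ q.hyps, γ.IsBalanced) :
    q.Realize N ↔ ∀ o, (q.subst (NTerm.focus o)).Realize N := by
  simp only [realize_subst_iff hN]
  refine ⟨fun h o ys hys => h _ hys, fun h xs hxs => ?_⟩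
  refine NAtom.realize_of_forall_focusPoint hN fun o => ?_
  have hc := h o fun _ => o.elim (wElem R M) xs
  rw [NTerm.realize_focus hN] at hc
  exact hc fun γ hγ => NAtom.realize_focusPoint_of_isBalanced hN (hbal γ hγ) (hxs γ hγ) o

theorem exists_finite_oneVar_equiv (hred : IsReductive M) (q : NQuasiId R M n) :
    ∃ Q : Set (NQuasiId R M 1), Q.Finite ∧ ∀ (N : Type w) [(LangM R M).Structure N],
      IsBModel R M N → (q.Realize N ↔ ∀ p ∈ Q, p.Realize N) := by
  classical
  induction hq : q.hyps.length using Nat.strong_induction_on generalizing q with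
  | _ len ih =>
  by_cases hbal : ∀ γ ∈ q.hyps, γ.IsBalanced
  · exact ⟨Set.range fun o => q.subst (NTerm.focus o), Set.finite_range _, fun N _ hN =>
      (q.realize_iff_forall_realize_subst_focus hN hbal).trans Set.forall_mem_range.symm⟩
  push Not at hbal
  obtain ⟨γ, hγ, hunbal⟩ := hbal
  obtain ⟨j, u, hu, hsolve⟩ := NAtom.exists_solved_form.{u, w} hred hunbal
  have hlen : (q.eliminate γ j u).hyps.length < len := by
    simp only [eliminate, subst, List.length_map, List.length_erase_of_mem hγ]
    have := List.length_pos_of_mem hγ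
    omega
  obtain ⟨Q, hQ, hQiff⟩ := ih _ hlen (q.eliminate γ j u) rfl
  exact ⟨Q, hQ, fun N _ hN =>
    (realize_iff_realize_eliminate hN hγ hu (hsolve N hN)).trans (hQiff N hN)⟩

end NQuasiId

end LangM

/-- Let `M` be a reductive monoid and let `B` be a theory in the
language `L` (unary relation symbols, unary function symbols indexed by `M`, one
constant `w`) satisfying: `∀x (A(x) → A(w))` for every unary relation symbol `A`;
`f(w) ≈ w` for every `f ∈ M`; `i(x) ≈ x` for the identity `i` of `M`, and
`f(g(x)) ≈ h(x)` whenever `h = gf` in `M`; and `∀x∀y (f(x) ≈ f(y) → x ≈ y)` for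
every `f ∈ M`.  Then every quasi-identity of `L` is equivalent modulo `B` to a
finite set of quasi-identities each containing at most one variable. -/
theorem quasiIdentity_one_variable_reduction (R M : Type u) [Monoid M]
    (hred : IsReductive M) (B : (LangM R M).Theory)
    (hBrel : ∀ r : R,
      B ⊨ᵇ ((relAtom r (x1 R M)).imp (relAtom r (wTerm R M))).all)
    (hBw : ∀ f : M,
      B ⊨ᵇ ((fnApp f (wTerm R M)).bdEqual (wTerm R M) : (LangM R M).Sentence))
    (hBid : B ⊨ᵇ ((fnApp (1 : M) (x1 R M)).bdEqual (x1 R M)).all)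
    (hBcomp : ∀ f g h : M, h = g * f →
      B ⊨ᵇ ((fnApp f (fnApp g (x1 R M))).bdEqual (fnApp h (x1 R M))).all)
    (hBinj : ∀ f : M,
      B ⊨ᵇ (((fnApp f (x2 R M)).bdEqual (fnApp f (y2 R M))).imp
        ((x2 R M).bdEqual (y2 R M))).all.all) :
    ∀ σ : (LangM R M).Sentence, IsQuasiIdentity σ →
      ∃ Ψ : (LangM R M).Theory, Ψ.Finite ∧
        (∀ τ ∈ Ψ, ∃ n ≤ 1, IsQuasiIdentityN n τ) ∧
        EquivModulo.{u, w} B {σ} Ψ := by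
  rintro _ ⟨n, hyps, concl, hhyps, hconcl, rfl⟩
  obtain ⟨Q, hQ, hQiff⟩ :=
    (LangM.NQuasiId.ofFormulas hyps concl).exists_finite_oneVar_equiv.{u, w} hred
  refine ⟨LangM.NQuasiId.toSentence '' Q, hQ.image _, ?_, fun N _ _ => ?_⟩
  · rintro _ ⟨p, -, rfl⟩
    exact ⟨1, le_rfl, p.isQuasiIdentityN_toSentence⟩
  rw [Theory.model_union_iff, Theory.model_union_iff, Theory.model_singleton_iff]
  refine and_congr_right fun hB => ?_
  have hN := LangM.isBModel_of_models (N := N) hBrel hBw hBid hBcomp hBinj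
  rw [LangM.NQuasiId.realize_alls_iff_realize_ofFormulas hN hhyps hconcl, hQiff N hN,
    Theory.model_iff, Set.forall_mem_image]
  simp only [LangM.NQuasiId.realize_toSentence]
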